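/- Let C_h denote the rooted complete d-ary tree of height h-1 (C_1 is a single vertex; the root of C_h has d branches equal to C_{h-1}). Then τ(S(C_h), x) < τ(S(C_{h-1}), x) for all h ≥ 2 and all x > 0. -/

import Mathlib

/-- A rooted tree: a root node together with a list of branches (rooted subtrees). -/
inductive RTree : Type
  | node : List RTree → RTree

namespace RTree

/-- Auxiliary fold: from the list of pairs `(M0 Tᵢ x, M Tᵢ x)` of the branches,
compute `(∏ᵢ M(Tᵢ,x), Σⱼ M0(Tⱼ,x) ∏_{i≠j} M(Tᵢ,x))`. -/
def comb : List (ℝ × ℝ) → ℝ × ℝ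
  | [] => (1, 0)
  | (m0, m) :: rest =>
    let pr := comb rest
    (m * pr.1, m0 * pr.1 + m * pr.2)

/-- `MM T x = (M₀(T,x), M₁(T,x))`: generating functions of matchings of `T`
not saturating / saturating the root. -/
def MM : RTree → ℝ → ℝ × ℝ
  | .node ts, x =>
    let pr := comb (ts.attach.map fun t =>
      let q := MM t.1 x
      (q.1, q.1 + q.2))
    (pr.1, x * pr.2)
  decreasing_by have := List.sizeOf_lt_of_mem t.2; simp only [RTree.node.sizeOf_spec]; omega

/-- Generating function of matchings not saturating the root. -/
def M0 (t : RTree) (x : ℝ) : ℝ := (MM t x).1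

/-- Generating function of matchings saturating the root. -/
def M1 (t : RTree) (x : ℝ) : ℝ := (MM t x).2

/-- The matching generating function `M(T,x) = M₀(T,x) + M₁(T,x)`. -/
def M (t : RTree) (x : ℝ) : ℝ := M0 t x + M1 t x

/-- `τ(T,x) = M₀(T,x)/M(T,x)`. -/
noncomputable def tau (t : RTree) (x : ℝ) : ℝ := M0 t x / M t x

/-- The subdivision tree: insert a new vertex in every edge. -/
def subdiv : RTree → RTree
  | .node ts => .node (ts.attach.map fun t => .node [subdiv t.1])
  decreasing_by have := List.sizeOf_lt_of_mem t.2; simp only [RTree.node.sizeOf_spec]; omega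

/-- Number of vertices. -/
def order : RTree → ℕ
  | .node ts => 1 + (ts.attach.map fun t => order t.1).sum
  decreasing_by have := List.sizeOf_lt_of_mem t.2; simp only [RTree.node.sizeOf_spec]; omega

end RTree

namespace RTree
/-- `C d h` is the rooted complete d-ary tree `C_{h+1}` of the paper (height `h`):
`C d 0` is a single vertex and the root of `C d (h+1)` has `d` branches `C d h`. -/
def C (d : ℕ) : ℕ → RTree
  | 0 => .node []
  | h + 1 => .node (List.replicate d (C d h))
end RTree

/-! Write `Sₕ` for `subdiv (C d h)`. Each branch of `Sₕ₊₁` is a new vertex above a copy of `Sₕ`, and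
the root of `Sₕ₊₁` carries `d` such branches; from this `τ(Sₕ₊₁) = φ(τ(Sₕ))` with the Möbius map
`φ(t) = (1 + x t) / (1 + x t + x d)` (`tauStep d x`), which is strictly increasing on `t ≥ 0`. Since
`τ(S₀) = 1` and `φ(1) < 1`, iterating the increasing map `φ` gives a strictly decreasing sequence. -/

namespace RTree

lemma comb_replicate (n : ℕ) (m0 m : ℝ) :
    comb (List.replicate n (m0, m)) = (m ^ n, n * m0 * m ^ (n - 1)) := by
  induction n with
  | zero => simp [comb]
  | succ k ih =>
    rw [List.replicate_succ, comb, ih]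
    rcases k with _ | j
    · simp
    · simp only [Nat.add_sub_cancel, Prod.mk.injEq, pow_succ]
      push_cast
      constructor <;> ring

lemma comb_pos (l : List (ℝ × ℝ)) (hl : ∀ p ∈ l, 0 ≤ p.1 ∧ 0 < p.2) :
    0 < (comb l).1 ∧ 0 ≤ (comb l).2 := by
  induction l with
  | nil => simp [comb]
  | cons p l ih =>
    obtain ⟨hp1, hp2⟩ := hl p List.mem_cons_self
    obtain ⟨ih1, ih2⟩ := ih fun q hq => hl q (List.mem_cons_of_mem p hq)
    exact ⟨by simp only [comb]; positivity, by simp only [comb]; positivity⟩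

lemma MM_node (ts : List RTree) (x : ℝ) :
    MM (.node ts) x =
      ((comb (ts.map fun t => (M0 t x, M t x))).1,
        x * (comb (ts.map fun t => (M0 t x, M t x))).2) := by
  rw [MM]
  exact congrArg (fun l => ((comb l).1, x * (comb l).2))
    (List.attach_map_val (f := fun t => (M0 t x, M t x)))

lemma subdiv_node (ts : List RTree) :
    subdiv (.node ts) = .node (ts.map fun t => .node [subdiv t]) := by
  rw [subdiv]
  congr 1
  exact List.attach_map_val (f := fun t => RTree.node [subdiv t])

theorem M0_pos_and_M1_nonneg {x : ℝ} (hx : 0 ≤ x) : ∀ t : RTree, 0 < M0 t x ∧ 0 ≤ M1 t x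
  | .node ts => by
    have hts : ∀ p ∈ ts.map fun t => (M0 t x, M t x), 0 ≤ p.1 ∧ 0 < p.2 := by
      simp only [List.mem_map]
      rintro _ ⟨t, ht, rfl⟩
      obtain ⟨h0, h1⟩ := M0_pos_and_M1_nonneg hx t
      exact ⟨h0.le, by rw [M]; linarith⟩
    obtain ⟨hc1, hc2⟩ := comb_pos _ hts
    simp only [M0, M1, MM_node]
    exact ⟨hc1, by positivity⟩
  termination_by t => sizeOf t
  decreasing_by have := List.sizeOf_lt_of_mem ht; simp only [RTree.node.sizeOf_spec]; omega

lemma M0_pos {x : ℝ} (hx : 0 ≤ x) (t : RTree) : 0 < M0 t x :=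
  (M0_pos_and_M1_nonneg hx t).1

lemma M_pos {x : ℝ} (hx : 0 ≤ x) (t : RTree) : 0 < M t x := by
  obtain ⟨h0, h1⟩ := M0_pos_and_M1_nonneg hx t
  rw [M]
  linarith

lemma tau_nonneg {x : ℝ} (hx : 0 ≤ x) (t : RTree) : 0 ≤ tau t x :=
  div_nonneg (M0_pos hx t).le (M_pos hx t).le

lemma M0_node_singleton (t : RTree) (x : ℝ) : M0 (.node [t]) x = M t x := by
  simp [M0, MM_node, comb]

lemma M_node_singleton (t : RTree) (x : ℝ) : M (.node [t]) x = M t x + x * M0 t x := by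
  simp [M, M0, M1, MM_node, comb]

lemma M0_node_replicate (d : ℕ) (t : RTree) (x : ℝ) :
    M0 (.node (List.replicate d t)) x = M t x ^ d := by
  simp [M0, MM_node, comb_replicate]

lemma M_node_replicate (d : ℕ) (t : RTree) (x : ℝ) :
    M (.node (List.replicate d t)) x = M t x ^ d + x * (d * M0 t x * M t x ^ (d - 1)) := by
  simp [M, M0, M1, MM_node, comb_replicate]

noncomputable def tauStep (d : ℕ) (x t : ℝ) : ℝ := (1 + x * t) / (1 + x * t + x * d)

lemma tauStep_strictMonoOn {d : ℕ} (hd : 1 ≤ d) {x : ℝ} (hx : 0 < x) :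
    StrictMonoOn (tauStep d x) (Set.Ici 0) := by
  intro s hs t ht hst
  have hd' : (1 : ℝ) ≤ d := by exact_mod_cast hd
  have hs' : (0 : ℝ) ≤ s := hs
  have ht' : (0 : ℝ) ≤ t := ht
  unfold tauStep
  rw [div_lt_div_iff₀ (by positivity) (by positivity)]
  nlinarith [mul_pos (mul_pos hx hx) (sub_pos.2 hst)]

lemma tauStep_one_lt_one {d : ℕ} (hd : 1 ≤ d) {x : ℝ} (hx : 0 < x) : tauStep d x 1 < 1 := by
  have hd' : (1 : ℝ) ≤ d := by exact_mod_cast hd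
  unfold tauStep
  rw [div_lt_one (by positivity)]
  nlinarith

lemma tau_node_replicate_node_singleton {d : ℕ} (hd : 1 ≤ d) {x : ℝ} (hx : 0 ≤ x) (t : RTree) :
    tau (.node (List.replicate d (.node [t]))) x = tauStep d x (tau t x) := by
  obtain ⟨k, rfl⟩ : ∃ k, d = k + 1 := ⟨d - 1, by omega⟩
  have hA := M0_pos hx t
  have hB := M_pos hx t
  have hQ : 0 < M t x + x * M0 t x := by positivity
  rw [tau, M0_node_replicate, M_node_replicate, M0_node_singleton, M_node_singleton, tauStep, tau,
    Nat.add_sub_cancel, pow_succ]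
  field_simp

lemma subdiv_C_succ (d h : ℕ) :
    subdiv (C d (h + 1)) = .node (List.replicate d (.node [subdiv (C d h)])) := by
  rw [C, subdiv_node, List.map_replicate]

lemma tau_subdiv_C_zero (d : ℕ) (x : ℝ) : tau (subdiv (C d 0)) x = 1 := by
  simp [C, subdiv_node, tau, M, M0, M1, MM_node, comb]

end RTree

open RTree in
/-- Lemma 3.1, monotonicity: `τ(S(C_h),x) < τ(S(C_{h-1}),x)` for all `h ≥ 2`, `x > 0`. -/
theorem tau_subdiv_completeAry_strictAnti (d : ℕ) (hd : 1 ≤ d) (x : ℝ) (hx : 0 < x)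
    (h : ℕ) :
    tau (subdiv (C d (h + 1))) x < tau (subdiv (C d h)) x := by
  have hstep : ∀ n, tau (subdiv (C d (n + 1))) x = tauStep d x (tau (subdiv (C d n)) x) :=
    fun n => by rw [subdiv_C_succ, tau_node_replicate_node_singleton hd hx.le]
  induction h with
  | zero => rw [hstep, tau_subdiv_C_zero]; exact tauStep_one_lt_one hd hx
  | succ n ih =>
    have := tauStep_strictMonoOn hd hx (tau_nonneg hx.le _) (tau_nonneg hx.le _) ih
    rwa [← hstep, ← hstep] at this
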